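/- Let t ∈ ℝ⁴ with ‖t‖₂ = 1, and let t' ∈ ℝ⁴ satisfy ‖t − t'‖_∞ ≤ 2^{-k} (i.e., t' is a k-bit truncation of t). Let t'' be any unit vector in ℝ⁴ with ‖t' − t''‖₂ ≤ √(3·|‖t'‖₂ − 1|). Then ‖U_t − U_{t''}‖₂ ≤ 4/√(2^k), where ‖·‖₂ on matrices denotes the spectral norm. -/
import Mathlib


open Matrix Complex

set_option maxHeartbeats 1000000
set_option synthInstance.maxHeartbeats 400000

noncomputable def PX : Matrix (Fin 2) (Fin 2) ℂ := !![0, 1; 1, 0]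
noncomputable def PZ : Matrix (Fin 2) (Fin 2) ℂ := !![1, 0; 0, -1]
noncomputable def PY : Matrix (Fin 2) (Fin 2) ℂ := !![0, -I; I, 0]

noncomputable def Uq (t : Fin 4 → ℝ) : Matrix (Fin 2) (Fin 2) ℂ :=
  (t 0 : ℂ) • (1 : Matrix (Fin 2) (Fin 2) ℂ)
    + (t 1 : ℂ) • (I • PX) + (t 2 : ℂ) • (I • PZ) + (t 3 : ℂ) • (I • PY)

/-- The L²-spectral norm of a 2×2 complex matrix. -/
noncomputable def specNorm (A : Matrix (Fin 2) (Fin 2) ℂ) : ℝ :=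
  ‖(Matrix.toEuclideanCLM (𝕜 := ℂ) (n := Fin 2)) A‖

lemma Uq_sub (a b : Fin 4 → ℝ) : Uq a - Uq b = Uq (a - b) := by
  simp only [Uq, Pi.sub_apply, Complex.ofReal_sub, sub_smul]
  abel

lemma Uq_mul (s : Fin 4 → ℝ) :
    (Uq s)ᴴ * Uq s = ((s 0 ^ 2 + s 1 ^ 2 + s 2 ^ 2 + s 3 ^ 2 : ℝ) : ℂ) • 1 := by
  ext i j
  fin_cases i <;> fin_cases j <;>
    simp [Uq, PX, PZ, PY, Matrix.mul_apply, Fin.sum_univ_succ, Matrix.one_apply,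
      Complex.ext_iff] <;>
    (try refine ⟨?_, ?_⟩) <;>
    (try simp only [← Complex.ofReal_pow, Complex.ofReal_re, Complex.ofReal_im]) <;>
    first | trivial | ring

lemma norm_smul_one_clm (c : ℂ) :
    ‖c • (1 : EuclideanSpace ℂ (Fin 2) →L[ℂ] EuclideanSpace ℂ (Fin 2))‖ = ‖c‖ := by
  have := norm_smul (α := ℂ)
    (β := EuclideanSpace ℂ (Fin 2) →L[ℂ] EuclideanSpace ℂ (Fin 2)) c 1
  rw [norm_one, mul_one] at this
  exact this

lemma specNorm_Uq (s : EuclideanSpace ℝ (Fin 4)) : specNorm (Uq s) = ‖s‖ := by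
  set f := Matrix.toEuclideanCLM (𝕜 := ℂ) (n := Fin 2) with hf
  have hn : ‖s‖ ^ 2 = s 0 ^ 2 + s 1 ^ 2 + s 2 ^ 2 + s 3 ^ 2 := by
    rw [EuclideanSpace.norm_eq, Real.sq_sqrt (by positivity)]
    simp [Fin.sum_univ_four, sq_abs]
  have key : specNorm (Uq s) ^ 2 = ‖s‖ ^ 2 := by
    have h1 : ‖star (f (Uq s)) * (f (Uq s))‖ = ‖f (Uq s)‖ * ‖f (Uq s)‖ := by
      have hs : star (f (Uq s)) = ContinuousLinearMap.adjoint (f (Uq s)) := rfl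
      rw [hs]
      exact ContinuousLinearMap.norm_adjoint_comp_self (f (Uq s))
    have h2 : star (f (Uq s)) * (f (Uq s)) = f ((Uq s)ᴴ * Uq s) := by
      rw [← Matrix.star_eq_conjTranspose, _root_.map_mul, map_star]
    rw [specNorm, sq, ← h1, h2, Uq_mul, _root_.map_smul, _root_.map_one, hn]
    rw [norm_smul_one_clm, Complex.norm_real, Real.norm_eq_abs,
      _root_.abs_of_nonneg (by positivity)]
  calc specNorm (Uq s) = Real.sqrt (specNorm (Uq s) ^ 2) :=
        (Real.sqrt_sq (norm_nonneg _)).symm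
    _ = Real.sqrt (‖s‖ ^ 2) := by rw [key]
    _ = ‖s‖ := Real.sqrt_sq (norm_nonneg _)

lemma sqrt2_add_sqrt6 : Real.sqrt 2 + Real.sqrt 6 ≤ 4 := by
  have h2 : Real.sqrt 2 ^ 2 = 2 := Real.sq_sqrt (by norm_num)
  have h6 : Real.sqrt 6 ^ 2 = 6 := Real.sq_sqrt (by norm_num)
  nlinarith [Real.sqrt_nonneg 2, Real.sqrt_nonneg 6,
    sq_nonneg (Real.sqrt 2 * Real.sqrt 6 - 4), sq_nonneg (Real.sqrt 2 + Real.sqrt 6 - 4)]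

theorem Uq_truncation_unitary_approx (k : ℕ)
    (t t' t'' : EuclideanSpace ℝ (Fin 4))
    (ht : ‖t‖ = 1)
    (hinf : ∀ i, |t i - t' i| ≤ 1 / 2 ^ k)
    (ht'' : ‖t''‖ = 1)
    (hd : ‖t' - t''‖ ≤ Real.sqrt (3 * |‖t'‖ - 1|)) :
    specNorm (Uq t - Uq t'') ≤ 4 / Real.sqrt (2 ^ k) := by
  have hspec : specNorm (Uq t - Uq t'') = ‖t - t''‖ := by
    rw [Uq_sub]
    exact specNorm_Uq (t - t'')
  rw [hspec]
  -- bound on ‖t - t'‖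
  have hpk : (0:ℝ) < 2 ^ k := by positivity
  have h1 : ‖t - t'‖ ≤ 2 / 2 ^ k := by
    rw [EuclideanSpace.norm_eq]
    have hb : ∀ i, ‖(t - t') i‖ ^ 2 ≤ (1 / 2 ^ k) ^ 2 := by
      intro i
      have : ‖(t - t') i‖ = |t i - t' i| := by
        simp [Real.norm_eq_abs]
      rw [this]
      have := hinf i
      nlinarith [abs_nonneg (t i - t' i)]
    have hsum : (∑ i, ‖(t - t') i‖ ^ 2) ≤ 4 * (1 / 2 ^ k) ^ 2 := by
      calc (∑ i, ‖(t - t') i‖ ^ 2) ≤ ∑ _i : Fin 4, (1 / 2 ^ k : ℝ) ^ 2 :=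
            Finset.sum_le_sum fun i _ => hb i
        _ = 4 * (1 / 2 ^ k) ^ 2 := by simp
    calc Real.sqrt (∑ i, ‖(t - t') i‖ ^ 2) ≤ Real.sqrt (4 * (1 / 2 ^ k) ^ 2) :=
          Real.sqrt_le_sqrt hsum
      _ = 2 / 2 ^ k := by
          rw [show (4 : ℝ) * (1 / 2 ^ k) ^ 2 = (2 / 2 ^ k) ^ 2 by ring,
            Real.sqrt_sq (by positivity)]
  have h2 : |‖t'‖ - 1| ≤ ‖t - t'‖ := by
    calc |‖t'‖ - 1| = |‖t'‖ - ‖t‖| := by rw [ht]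
      _ ≤ ‖t' - t‖ := abs_norm_sub_norm_le t' t
      _ = ‖t - t'‖ := by rw [norm_sub_rev]
  have h3 : ‖t' - t''‖ ≤ Real.sqrt 6 / Real.sqrt (2 ^ k) := by
    calc ‖t' - t''‖ ≤ Real.sqrt (3 * |‖t'‖ - 1|) := hd
      _ ≤ Real.sqrt (3 * (2 / 2 ^ k)) := Real.sqrt_le_sqrt (by nlinarith [h1, h2])
      _ = Real.sqrt 6 / Real.sqrt (2 ^ k) := by
          rw [show (3:ℝ) * (2 / 2 ^ k) = 6 / 2 ^ k by ring,
            Real.sqrt_div (by norm_num : (0:ℝ) ≤ 6)]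
  have htri : ‖t - t''‖ ≤ ‖t - t'‖ + ‖t' - t''‖ := by
    calc ‖t - t''‖ = ‖(t - t') + (t' - t'')‖ := by abel_nf
      _ ≤ ‖t - t'‖ + ‖t' - t''‖ := norm_add_le _ _
  rcases Nat.eq_zero_or_pos k with hk | hk
  · subst hk
    have : ‖t - t''‖ ≤ 2 := by
      calc ‖t - t''‖ ≤ ‖t‖ + ‖t''‖ := norm_sub_le t t''
        _ = 2 := by rw [ht, ht'']; norm_num
    simpa using this.trans (by norm_num)
  · have hy : Real.sqrt 2 ≤ Real.sqrt (2 ^ k) :=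
      Real.sqrt_le_sqrt (by calc (2:ℝ) = 2 ^ 1 := by norm_num
        _ ≤ 2 ^ k := by exact_mod_cast pow_le_pow_right₀ (by norm_num) hk)
    have hy0 : (0:ℝ) < Real.sqrt (2 ^ k) := Real.sqrt_pos.mpr hpk
    have hsq : Real.sqrt (2 ^ k) ^ 2 = 2 ^ k := Real.sq_sqrt (le_of_lt hpk)
    have h4 : 2 / (2:ℝ) ^ k ≤ Real.sqrt 2 / Real.sqrt (2 ^ k) := by
      rw [div_le_div_iff₀ hpk hy0]
      have h2' : Real.sqrt 2 ^ 2 = 2 := Real.sq_sqrt (by norm_num)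
      nlinarith [Real.sqrt_nonneg 2, hy0, hy, hsq,
        mul_le_mul_of_nonneg_right hy (le_of_lt hy0),
        mul_le_mul_of_nonneg_left hy (Real.sqrt_nonneg 2)]
    calc ‖t - t''‖ ≤ 2 / 2 ^ k + Real.sqrt 6 / Real.sqrt (2 ^ k) := by linarith
      _ ≤ Real.sqrt 2 / Real.sqrt (2 ^ k) + Real.sqrt 6 / Real.sqrt (2 ^ k) := by linarith
      _ = (Real.sqrt 2 + Real.sqrt 6) / Real.sqrt (2 ^ k) := by ring
      _ ≤ 4 / Real.sqrt (2 ^ k) := by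
          gcongr
          exact sqrt2_add_sqrt6
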